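/- arXiv:1606.07320 — 5 statements merged into one kernel-verified Lean document; each statement's English description precedes it below -/
import Mathlib

section
/- If u ∈ L^2(R^N) ∩ L^∞(R^N), then u belongs to the Orlicz space exp L^2(R^N) and ‖u‖_{exp L^2} ≤ (1/√(log 2)) (‖u‖_{L^2} + ‖u‖_{L^∞}). -/
open MeasureTheory

/-- Luxembourg norm of the Orlicz space exp L² on ℝ^N. -/
noncomputable def expL2Norm {N : ℕ} (u : EuclideanSpace ℝ (Fin N) → ℝ) : ℝ :=
  sInf {α : ℝ | 0 < α ∧
    (∫⁻ x, ENNReal.ofReal (Real.exp ((u x) ^ 2 / α ^ 2) - 1)) ≤ 1}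

/-! By convexity of `exp`, `e^s - 1 ≤ s / log 2` for `0 ≤ s ≤ log 2`. If `|u| ≤ α √(log 2)` a.e.,
this applies to `s = u² / α²`, so the Orlicz modular of `u` at `α` is at most
`‖u‖₂² / (α² log 2)`, which is `≤ 1` as soon as `‖u‖₂ ≤ α √(log 2)` as well. Both conditions hold
for every `α > (‖u‖₂ + ‖u‖_∞) / √(log 2)`. -/

theorem Real.exp_sub_one_le_of_le {s L : ℝ} (hs : 0 ≤ s) (hsL : s ≤ L) (hL : 0 < L) :
    Real.exp s - 1 ≤ s / L * (Real.exp L - 1) := by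
  have h := convexOn_exp.2 (Set.mem_univ 0) (Set.mem_univ L)
    (sub_nonneg.2 ((div_le_one hL).2 hsL)) (div_nonneg hs hL.le) (sub_add_cancel 1 (s / L))
  simp only [smul_eq_mul, mul_zero, zero_add, Real.exp_zero, mul_one,
    div_mul_cancel₀ s hL.ne'] at h
  linarith

theorem Real.exp_sq_div_sq_sub_one_le {t α : ℝ} (hα : 0 < α) (ht : |t| ≤ α * √(Real.log 2)) :
    Real.exp (t ^ 2 / α ^ 2) - 1 ≤ t ^ 2 / (α * √(Real.log 2)) ^ 2 := by
  have hlog : 0 < Real.log 2 := Real.log_pos one_lt_two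
  have hsq : (α * √(Real.log 2)) ^ 2 = α ^ 2 * Real.log 2 := by
    rw [mul_pow, Real.sq_sqrt hlog.le]
  have ht2 : t ^ 2 / α ^ 2 ≤ Real.log 2 := by
    rw [div_le_iff₀ (by positivity), mul_comm, ← hsq, ← sq_abs]
    exact pow_le_pow_left₀ (abs_nonneg t) ht 2
  calc Real.exp (t ^ 2 / α ^ 2) - 1
      ≤ t ^ 2 / α ^ 2 / Real.log 2 * (Real.exp (Real.log 2) - 1) :=
        Real.exp_sub_one_le_of_le (by positivity) ht2 hlog
    _ = t ^ 2 / (α * √(Real.log 2)) ^ 2 := by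
        rw [Real.exp_log two_pos, hsq]; ring

theorem lintegral_exp_sq_div_sq_sub_one_le_one {X : Type*} [MeasurableSpace X] {μ : Measure X}
    {u : X → ℝ} {α : ℝ} (hα : 0 < α)
    (h2 : eLpNorm u 2 μ ≤ ENNReal.ofReal (α * √(Real.log 2)))
    (hi : eLpNorm u ⊤ μ ≤ ENNReal.ofReal (α * √(Real.log 2))) :
    ∫⁻ x, ENNReal.ofReal (Real.exp (u x ^ 2 / α ^ 2) - 1) ∂μ ≤ 1 := by
  set M := α * √(Real.log 2)
  have hM : 0 < M := by have := Real.log_pos one_lt_two; positivity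
  have hbound : ∀ᵐ x ∂μ, |u x| ≤ M := by
    filter_upwards [enorm_ae_le_eLpNormEssSup u μ] with x hx
    rw [← eLpNorm_exponent_top, Real.enorm_eq_ofReal_abs] at hx
    exact (ENNReal.ofReal_le_ofReal_iff hM.le).1 (hx.trans hi)
  have hofReal_div (t : ℝ) :
      ENNReal.ofReal (t ^ 2 / M ^ 2) = ‖t‖ₑ ^ 2 * (ENNReal.ofReal M ^ 2)⁻¹ := by
    rw [ENNReal.ofReal_div_of_pos (by positivity), Real.enorm_eq_ofReal_abs,
      ← ENNReal.ofReal_pow hM.le,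
      ← ENNReal.ofReal_pow (abs_nonneg t), sq_abs, div_eq_mul_inv]
  have hL2 : eLpNorm u 2 μ ^ 2 = ∫⁻ x, ‖u x‖ₑ ^ 2 ∂μ := by
    simpa using eLpNorm_nnreal_pow_eq_lintegral (f := u) (μ := μ) (p := 2) two_ne_zero
  calc ∫⁻ x, ENNReal.ofReal (Real.exp (u x ^ 2 / α ^ 2) - 1) ∂μ
      ≤ ∫⁻ x, ENNReal.ofReal (u x ^ 2 / M ^ 2) ∂μ := by
        refine lintegral_mono_ae ?_
        filter_upwards [hbound] with x hx
        exact ENNReal.ofReal_le_ofReal (Real.exp_sq_div_sq_sub_one_le hα hx)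
    _ = eLpNorm u 2 μ ^ 2 * (ENNReal.ofReal M ^ 2)⁻¹ := by
        simp_rw [hofReal_div, hL2]
        exact lintegral_mul_const' _ _ (by simp [hM])
    _ ≤ 1 := by
        rw [← div_eq_mul_inv]
        exact ENNReal.div_le_of_le_mul (by rw [one_mul]; gcongr)

/-- If u ∈ L² ∩ L^∞ then u ∈ exp L² with
    ‖u‖_{exp L²} ≤ (1/√(log 2)) (‖u‖_{L²} + ‖u‖_{L^∞}). -/
theorem l2_linfty_embeds_expL2 {N : ℕ} (u : EuclideanSpace ℝ (Fin N) → ℝ)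
    (h2 : MemLp u 2 volume) (hi : MemLp u ⊤ volume) :
    (∃ α > 0, (∫⁻ x, ENNReal.ofReal (Real.exp ((u x) ^ 2 / α ^ 2) - 1)) < ⊤) ∧
    expL2Norm u ≤ (1 / Real.sqrt (Real.log 2)) *
      ((eLpNorm u 2 volume).toReal + (eLpNorm u ⊤ volume).toReal) := by
  set A := (eLpNorm u 2 volume).toReal
  set B := (eLpNorm u ⊤ volume).toReal
  have hlog : 0 < √(Real.log 2) := Real.sqrt_pos.2 (Real.log_pos one_lt_two)
  have hmem : ∀ α, 1 / √(Real.log 2) * (A + B) < α →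
      0 < α ∧ ∫⁻ x, ENNReal.ofReal (Real.exp (u x ^ 2 / α ^ 2) - 1) ≤ 1 := by
    intro α hα
    rw [one_div_mul_eq_div, div_lt_iff₀ hlog] at hα
    have hA : 0 ≤ A := ENNReal.toReal_nonneg
    have hB : 0 ≤ B := ENNReal.toReal_nonneg
    have hα0 : 0 < α := pos_of_mul_pos_left (hA.trans_lt (by linarith)) hlog.le
    refine ⟨hα0, lintegral_exp_sq_div_sq_sub_one_le_one hα0 ?_ ?_⟩
    · exact (ENNReal.le_ofReal_iff_toReal_le h2.2.ne (by positivity)).2 (by linarith)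
    · exact (ENNReal.le_ofReal_iff_toReal_le hi.2.ne (by positivity)).2 (by linarith)
  obtain ⟨α, hα⟩ := exists_gt (1 / √(Real.log 2) * (A + B))
  exact ⟨⟨α, (hmem α hα).1, (hmem α hα).2.trans_lt ENNReal.one_lt_top⟩,
    le_of_forall_gt_imp_ge_of_dense fun α hα => csInf_le ⟨0, fun _ h => h.1.le⟩ (hmem α hα)⟩
end

section
/- The function u defined on R^N by u(x) = (log(1 − log|x|))^{1/2} for 0 < |x| ≤ 1 and u(x)=0 for |x|>1 satisfies ∫_{R^N}(e^{u(x)^2/α^2}−1)dx < ∞ for every α > 0, yet u is not essentially bounded. Hence exp L^2_0(R^N) is not contained in L^∞(R^N). -/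
/-!
With `p = α⁻²` and `r = ‖x‖ ∈ (0, 1]` one has `exp (u x ^ 2 / α ^ 2) = (1 - log r) ^ p`, which
grows only polylogarithmically as `r → 0`, hence is at most `C * r ^ (-1/2)`; and `‖x‖ ^ (-1/2)`
is integrable on the unit ball in every dimension `N ≥ 1`. Yet `u x → ∞` as `x → 0`, so `u`
exceeds every bound on a punctured ball, a set of positive measure.
-/

open MeasureTheory Set Filter Topology Real

lemma eLpNorm_top_eq_top_of_tendsto_norm_nhdsNE {α F : Type*} [TopologicalSpace α]
    [MeasurableSpace α] {μ : Measure α} [μ.IsOpenPosMeasure] [NullSingletonClass μ]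
    [NormedAddCommGroup F] {f : α → F} {a : α}
    (hf : Tendsto (fun x ↦ ‖f x‖) (𝓝[≠] a) atTop) : eLpNorm f ⊤ μ = ⊤ := by
  rw [eLpNorm_exponent_top, ← not_lt_top_iff, eLpNormEssSup_lt_top_iff_isBoundedUnder]
  rintro ⟨C, hC⟩
  obtain ⟨U, hU, hUf⟩ := mem_nhdsWithin_iff_exists_mem_nhds_inter.1 (hf.eventually_gt_atTop C)
  have hpos : μ (U \ {a}) ≠ 0 := by
    rw [measure_sdiff_null (measure_singleton a)]
    exact (Measure.measure_pos_of_mem_nhds μ hU).ne'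
  refine hpos (measure_mono_null (fun x hx ↦ ?_) (ae_iff.1 (eventually_map.1 hC)))
  simpa [← NNReal.coe_le_coe] using hUf hx

lemma one_sub_log_rpow_le {p r : ℝ} (hp : 0 < p) (hr : 0 < r) (hr1 : r ≤ 1) :
    (1 - log r) ^ p ≤ exp (1 / 2 + p * (log (2 * p) - 1)) * r ^ (-(1 / 2 : ℝ)) := by
  have hw : 0 < 1 - log r := by linarith [log_nonpos hr.le hr1]
  -- `log` lies below its tangent line at `2p`.
  have htangent : p * log (1 - log r) ≤ (1 - log r) / 2 + p * (log (2 * p) - 1) := by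
    have h := log_le_sub_one_of_pos (div_pos hw (by positivity : 0 < 2 * p))
    rw [log_div hw.ne' (by positivity)] at h
    have hhalf : p * ((1 - log r) / (2 * p)) = (1 - log r) / 2 := by field_simp
    linarith [mul_le_mul_of_nonneg_left h hp.le]
  rw [rpow_def_of_pos hw, rpow_def_of_pos hr, ← exp_add, exp_le_exp]
  linarith

noncomputable def logLogProfile (r : ℝ) : ℝ :=
  if r ≤ 1 then √(log (1 - log r)) else 0

@[fun_prop]
lemma measurable_logLogProfile : Measurable logLogProfile :=
  Measurable.ite measurableSet_Iic (by fun_prop) measurable_const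

lemma logLogProfile_of_one_le {r : ℝ} (hr : 1 ≤ r) : logLogProfile r = 0 := by
  rcases hr.eq_or_lt with rfl | hr
  · simp [logLogProfile]
  · simp [logLogProfile, hr.not_ge]

lemma exp_sq_div_logLogProfile {s r : ℝ} (hr : 0 < r) (hr1 : r ≤ 1) :
    exp (logLogProfile r ^ 2 / s) = (1 - log r) ^ s⁻¹ := by
  have hlog : log r ≤ 0 := log_nonpos hr.le hr1
  rw [logLogProfile, if_pos hr1, sq_sqrt (log_nonneg (by linarith)),
    rpow_def_of_pos (by linarith), div_eq_mul_inv]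

lemma exp_sq_div_logLogProfile_sub_one_le {s r : ℝ} (hs : 0 < s) (hr : 0 ≤ r) :
    exp (logLogProfile r ^ 2 / s) - 1 ≤
      exp (1 / 2 + s⁻¹ * (log (2 * s⁻¹) - 1)) * r ^ (-(1 / 2 : ℝ)) := by
  rcases hr.eq_or_lt with rfl | hr
  · simp [logLogProfile]
  rcases le_or_gt 1 r with hr1 | hr1
  · simp only [logLogProfile_of_one_le hr1, zero_pow two_ne_zero, zero_div, exp_zero, sub_self]
    positivity
  rw [exp_sq_div_logLogProfile hr hr1.le]
  linarith [one_sub_log_rpow_le (inv_pos.2 hs) hr hr1.le]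

lemma integrable_exp_sq_div_logLogProfile_norm_sub_one {E : Type*} [NormedAddCommGroup E]
    [NormedSpace ℝ E] [FiniteDimensional ℝ E] [MeasurableSpace E] [BorelSpace E]
    (μ : Measure E) [μ.IsAddHaarMeasure] (hd : 1 ≤ Module.finrank ℝ E) {s : ℝ} (hs : 0 < s) :
    Integrable (fun x ↦ exp (logLogProfile ‖x‖ ^ 2 / s) - 1) μ := by
  have hdecay : ∀ x : E, ‖exp (logLogProfile ‖x‖ ^ 2 / s) - 1‖ ≤
      exp (1 / 2 + s⁻¹ * (log (2 * s⁻¹) - 1)) * ‖x‖ ^ (-(1 / 2 : ℝ)) := fun x ↦ by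
    rw [norm_of_nonneg (sub_nonneg.2 (one_le_exp (by positivity)))]
    exact exp_sq_div_logLogProfile_sub_one_le hs (norm_nonneg x)
  have hmeas : Measurable fun x : E ↦ exp (logLogProfile ‖x‖ ^ 2 / s) - 1 := by fun_prop
  refine (integrableOn_ball_of_norm_le_rpow (r := 1) hd ?_ (ae_of_all _ hdecay)
    hmeas.aestronglyMeasurable).integrable_of_forall_notMem_eq_zero fun x hx ↦ ?_
  · have : (1 : ℝ) ≤ Module.finrank ℝ E := by exact_mod_cast hd
    linarith
  · rw [logLogProfile_of_one_le (by simpa using hx)]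
    simp

lemma tendsto_logLogProfile_nhdsGT_zero : Tendsto logLogProfile (𝓝[>] 0) atTop := by
  have h : Tendsto (fun r ↦ √(log (1 - log r))) (𝓝[>] 0) atTop :=
    tendsto_sqrt_atTop.comp <| tendsto_log_atTop.comp <|
      tendsto_atTop_add_const_left _ 1 (tendsto_neg_atBot_atTop.comp tendsto_log_nhdsGT_zero)
  refine h.congr' ?_
  filter_upwards [Ioo_mem_nhdsGT zero_lt_one] with r hr
  simp [logLogProfile, hr.2.le]

/-- The function u(x) = (log(1−log|x|))^{1/2} for |x|≤1, 0 otherwise, belongs to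
    exp L²₀ (finite integral for every α > 0) but is not essentially bounded. -/
theorem expL2zero_not_Linfty_example {N : ℕ} (hN : 1 ≤ N)
    (u : EuclideanSpace ℝ (Fin N) → ℝ)
    (hu : ∀ x, u x = if ‖x‖ ≤ 1 then Real.sqrt (Real.log (1 - Real.log ‖x‖)) else 0) :
    (∀ α : ℝ, 0 < α →
      (∫⁻ x, ENNReal.ofReal (Real.exp ((u x) ^ 2 / α ^ 2) - 1)) < ⊤) ∧
    eLpNorm u ⊤ volume = ⊤ := by
  obtain rfl : u = fun x ↦ logLogProfile ‖x‖ := funext hu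
  have : Nontrivial (EuclideanSpace ℝ (Fin N)) := by
    have : Nonempty (Fin N) := Fin.pos_iff_nonempty.1 hN
    infer_instance
  refine ⟨fun α hα ↦ ?_, eLpNorm_top_eq_top_of_tendsto_norm_nhdsNE (a := 0) ?_⟩
  · exact (integrable_exp_sq_div_logLogProfile_norm_sub_one volume
      (by rwa [finrank_euclideanSpace_fin]) (by positivity)).lintegral_lt_top
  · exact tendsto_norm_atTop_atTop.comp
      (tendsto_logLogProfile_nhdsGT_zero.comp tendsto_norm_nhdsNE_zero)
end

section
/- Let N ≥ 9 and q > N/4. The function κ(t) = min{ t^{−N/(4q)} + 1 , t^{−N/4} (log(t^{−N/4}+1))^{−1/2} } is integrable on (0, ∞). -/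
/-!
Near `0` the first branch of the minimum is `t ^ (-N/(4q)) + 1`, integrable on `(0, 1]` because
`N/(4q) < 1`. Near `∞` we use the second branch: with `s = t ^ (-N/4) ∈ (0, 1]` one has
`log (s + 1) ≥ s / 2`, so it is at most `√2 * s ^ (1/2) = √2 * t ^ (-N/8)`, integrable on
`(1, ∞)` because `N/8 > 1`.
-/

open MeasureTheory Set Real

lemma half_le_log_add_one {s : ℝ} (hs0 : 0 ≤ s) (hs2 : s ≤ 2) : s / 2 ≤ log (s + 1) := by
  refine le_trans ?_ (add_comm s 1 ▸ le_log_one_add_of_nonneg hs0)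
  rw [div_le_div_iff₀ two_pos (by linarith)]
  nlinarith

lemma mul_log_add_one_rpow_neg_half_le {s : ℝ} (hs0 : 0 < s) (hs2 : s ≤ 2) :
    s * log (s + 1) ^ (-(1 / 2 : ℝ)) ≤ √2 * s ^ (1 / 2 : ℝ) :=
  calc s * log (s + 1) ^ (-(1 / 2 : ℝ))
      ≤ s * (s / 2) ^ (-(1 / 2 : ℝ)) :=
        mul_le_mul_of_nonneg_left (rpow_le_rpow_of_nonpos (by positivity)
          (half_le_log_add_one hs0.le hs2) (by norm_num)) hs0.le
    _ = √2 * s ^ (1 / 2 : ℝ) := by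
        rw [div_rpow hs0.le zero_le_two, rpow_neg zero_le_two, div_inv_eq_mul, ← mul_assoc,
          ← rpow_one_add' hs0.le (by norm_num), sqrt_eq_rpow]
        norm_num [mul_comm]

lemma rpow_mul_log_rpow_add_one_rpow_nonneg {t : ℝ} (ht : 0 ≤ t) (r : ℝ) :
    0 ≤ t ^ r * log (t ^ r + 1) ^ (-(1 / 2 : ℝ)) := by
  have hs := rpow_nonneg ht r
  exact mul_nonneg hs (rpow_nonneg (log_nonneg (by linarith)) _)

theorem integrableOn_Ioc_zero_one_rpow_add_one {r : ℝ} (hr : -1 < r) :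
    IntegrableOn (fun t : ℝ => t ^ r + 1) (Ioc 0 1) := by
  have h := intervalIntegral.intervalIntegrable_rpow' (a := 0) (b := 1) hr
  rw [intervalIntegrable_iff, uIoc_of_le zero_le_one] at h
  exact h.add (integrableOn_const measure_Ioc_lt_top.ne)

theorem integrableOn_Ioi_one_rpow_mul_log_rpow_add_one_rpow {r : ℝ} (hr : r < -2) :
    IntegrableOn (fun t : ℝ => t ^ r * log (t ^ r + 1) ^ (-(1 / 2 : ℝ))) (Ioi 1) := by
  have hdom : IntegrableOn (fun t : ℝ => √2 * t ^ (r / 2)) (Ioi 1) :=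
    (integrableOn_Ioi_rpow_of_lt (by linarith) one_pos).const_mul _
  refine hdom.mono' (by fun_prop) ?_
  filter_upwards [ae_restrict_mem measurableSet_Ioi] with t (ht : 1 < t)
  have ht0 : 0 < t := one_pos.trans ht
  have hs1 : t ^ r ≤ 1 := rpow_le_one_of_one_le_of_nonpos ht.le (by linarith)
  rw [norm_of_nonneg (rpow_mul_log_rpow_add_one_rpow_nonneg ht0.le r), div_eq_mul_one_div r,
    rpow_mul ht0.le]
  exact mul_log_add_one_rpow_neg_half_le (rpow_pos_of_pos ht0 r) (by linarith)

theorem integrableOn_Ioi_zero_min {f g : ℝ → ℝ} (hf : IntegrableOn f (Ioc 0 1))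
    (hg : IntegrableOn g (Ioi 1)) (hfm : Measurable f) (hgm : Measurable g)
    (hf0 : ∀ t > 0, 0 ≤ f t) (hg0 : ∀ t > 0, 0 ≤ g t) :
    IntegrableOn (fun t => min (f t) (g t)) (Ioi 0) := by
  have hm : Measurable (fun t => min (f t) (g t)) := hfm.min hgm
  rw [← Ioc_union_Ioi_eq_Ioi zero_le_one]
  refine IntegrableOn.union (hf.mono' hm.aestronglyMeasurable ?_)
    (hg.mono' hm.aestronglyMeasurable ?_)
  · filter_upwards [ae_restrict_mem measurableSet_Ioc] with t ht
    rw [norm_of_nonneg (le_min (hf0 t ht.1) (hg0 t ht.1))]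
    exact min_le_left _ _
  · filter_upwards [ae_restrict_mem measurableSet_Ioi] with t (ht : 1 < t)
    rw [norm_of_nonneg (le_min (hf0 t (one_pos.trans ht)) (hg0 t (one_pos.trans ht)))]
    exact min_le_right _ _

/-- For N ≥ 9 and q > N/4, the function
    κ(t) = min{t^{−N/(4q)}+1, t^{−N/4}(log(t^{−N/4}+1))^{−1/2}} is integrable on (0,∞). -/
theorem kappa_integrable (N : ℕ) (hN : 9 ≤ N) (q : ℝ) (hq : (N : ℝ) / 4 < q) :
    IntegrableOn (fun t : ℝ =>
        min (t ^ (-(N : ℝ) / (4 * q)) + 1)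
          (t ^ (-(N : ℝ) / 4) * (Real.log (t ^ (-(N : ℝ) / 4) + 1)) ^ (-(1 / 2 : ℝ))))
      (Set.Ioi (0 : ℝ)) volume := by
  have hN9 : (9 : ℝ) ≤ N := by exact_mod_cast hN
  have hq0 : 0 < q := by linarith
  have hnear : -1 < -(N : ℝ) / (4 * q) := by
    rw [neg_div, neg_lt_neg_iff, div_lt_one (by positivity)]
    linarith
  exact integrableOn_Ioi_zero_min (integrableOn_Ioc_zero_one_rpow_add_one hnear)
    (integrableOn_Ioi_one_rpow_mul_log_rpow_add_one_rpow (by linarith))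
    (by fun_prop) (by fun_prop) (fun t ht => by positivity)
    (fun t ht => rpow_mul_log_rpow_add_one_rpow_nonneg ht.le _)
end

section
/- Let f: R → R satisfy f(0) = 0 and |f(u) − f(v)| ≤ C|u−v|(e^{λu²} + e^{λv²}) for all u, v ∈ R, some C, λ > 0. Let 2 ≤ p < ∞ and let u, w ∈ exp L²(R^N). Then ‖f(u) − f(w)‖_{L^p} ≤ C' ‖u − w‖_{exp L²} (1 + ‖e^{λu²}−1‖_{L^{2p}} + ‖e^{λw²}−1‖_{L^{2p}}) for a constant C' depending only on C and p. -/
open MeasureTheory Real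
open scoped ENNReal Nat

theorem ENNReal.holderTriple_two_mul (p : ℝ≥0∞) : ENNReal.HolderTriple (2 * p) (2 * p) p where
  inv_add_inv_eq_inv := by
    rw [ENNReal.mul_inv (by simp) (by simp), ← add_mul, ENNReal.inv_two_add_inv_two, one_mul]

theorem Real.rpow_le_factorial_mul_exp_sub_one {m t : ℝ} {n : ℕ} (hm : 1 ≤ m) (hmn : m ≤ n)
    (ht : 0 ≤ t) : t ^ m ≤ n ! * (exp t - 1) := by
  have hn : n ≠ 0 := by rintro rfl; norm_num at hmn; linarith
  have hfac : (1 : ℝ) ≤ n ! := Nat.one_le_cast.mpr n.factorial_pos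
  have hpow : t ^ n ≤ n ! * (exp t - 1) := by
    have h : 1 + t ^ n / n ! ≤ exp t :=
      calc 1 + t ^ n / n ! = ∑ i ∈ {0, n}, t ^ i / i ! := by simp [Finset.sum_pair hn.symm]
        _ ≤ ∑ i ∈ Finset.range (n + 1), t ^ i / i ! :=
          Finset.sum_le_sum_of_subset_of_nonneg (by intro i; simp; omega)
            (fun i _ _ ↦ by positivity)
        _ ≤ exp t := sum_le_exp_of_nonneg ht _
    rw [← div_le_iff₀' (by positivity)]
    linarith
  rcases le_total t 1 with ht1 | ht1
  · calc t ^ m ≤ t := rpow_le_self_of_le_one ht ht1 hm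
      _ ≤ exp t - 1 := by linarith [add_one_le_exp t]
      _ ≤ n ! * (exp t - 1) := le_mul_of_one_le_left (by linarith [add_one_le_exp t]) hfac
  · calc t ^ m ≤ t ^ (n : ℝ) := rpow_le_rpow_of_exponent_le ht1 hmn
      _ = t ^ n := rpow_natCast t n
      _ ≤ n ! * (exp t - 1) := hpow

theorem abs_rpow_eq_sq_div_sq_rpow_mul {x a q : ℝ} (ha : 0 < a) :
    |x| ^ q = (x ^ 2 / a ^ 2) ^ (q / 2) * a ^ q := by
  rw [← div_pow, ← sq_abs, ← rpow_natCast, ← rpow_mul (by positivity), abs_div, abs_of_pos ha,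
    div_rpow (abs_nonneg x) ha.le, Nat.cast_ofNat, mul_div_cancel₀ q two_ne_zero,
    div_mul_cancel₀ _ (rpow_pos_of_pos ha q).ne']

theorem exp_sub_sq_div_sub_one_le {s t a b : ℝ} (ha : 0 < a) (hb : 0 < b) :
    exp ((s - t) ^ 2 / (2 * max a b) ^ 2) - 1 ≤
      2⁻¹ * (exp (s ^ 2 / a ^ 2) - 1) + 2⁻¹ * (exp (t ^ 2 / b ^ 2) - 1) := by
  set M := max a b
  have hM : 0 < M := lt_max_of_lt_left ha
  have hsM : s ^ 2 / M ^ 2 ≤ s ^ 2 / a ^ 2 := by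
    gcongr; exact le_max_left a b
  have htM : t ^ 2 / M ^ 2 ≤ t ^ 2 / b ^ 2 := by
    gcongr; exact le_max_right a b
  have hsq : (s - t) ^ 2 / (2 * M) ^ 2 ≤ 2⁻¹ * (s ^ 2 / M ^ 2) + 2⁻¹ * (t ^ 2 / M ^ 2) := by
    rw [mul_pow, ← div_div, div_le_iff₀ (by positivity)]
    field_simp
    nlinarith [sq_nonneg (s + t)]
  have hconv := convexOn_exp.2 (Set.mem_univ (s ^ 2 / M ^ 2)) (Set.mem_univ (t ^ 2 / M ^ 2))
    (by norm_num : (0 : ℝ) ≤ 2⁻¹) (by norm_num : (0 : ℝ) ≤ 2⁻¹) (by norm_num)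
  simp only [smul_eq_mul] at hconv
  have hexp_sq := exp_le_exp.2 hsq
  have hexp_s := exp_le_exp.2 hsM
  have hexp_t := exp_le_exp.2 htM
  linarith

/-- `⌈q/2⌉!` stands in for the `Γ(q/2 + 1)` of the sharp embedding constant. -/
noncomputable def expL2EmbeddingConst (q : ℝ) : ℝ := (⌈q / 2⌉₊ ! : ℝ) ^ q⁻¹

theorem expL2EmbeddingConst_pos (q : ℝ) : 0 < expL2EmbeddingConst q :=
  rpow_pos_of_pos (by positivity) _

section

variable {α : Type*} [MeasurableSpace α] {μ : Measure α}

/-- `expL2Norm v` is the infimum of the `a > 0` with `expSqModular volume v a ≤ 1`. -/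
noncomputable def expSqModular (μ : Measure α) (v : α → ℝ) (a : ℝ) : ℝ≥0∞ :=
  ∫⁻ x, ENNReal.ofReal (exp (v x ^ 2 / a ^ 2) - 1) ∂μ

theorem eLpNorm_le_of_expSqModular_le_one {q : ℝ} (hq : 2 ≤ q) {v : α → ℝ} {a : ℝ} (ha : 0 < a)
    (hv : expSqModular μ v a ≤ 1) :
    eLpNorm v (ENNReal.ofReal q) μ ≤ ENNReal.ofReal (expL2EmbeddingConst q * a) := by
  have hq0 : 0 < q := by linarith
  set K : ℝ := (⌈q / 2⌉₊ ! : ℝ)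
  have hpt : ∀ x, ‖v x‖ₑ ^ q ≤
      ENNReal.ofReal (K * a ^ q) * ENNReal.ofReal (exp (v x ^ 2 / a ^ 2) - 1) := by
    intro x
    rw [← ofReal_norm, ENNReal.ofReal_rpow_of_nonneg (norm_nonneg _) hq0.le,
      ← ENNReal.ofReal_mul (by positivity), Real.norm_eq_abs, abs_rpow_eq_sq_div_sq_rpow_mul ha]
    refine ENNReal.ofReal_le_ofReal ?_
    have := rpow_le_factorial_mul_exp_sub_one (by linarith) (Nat.le_ceil (q / 2))
      (by positivity : 0 ≤ v x ^ 2 / a ^ 2)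
    calc (v x ^ 2 / a ^ 2) ^ (q / 2) * a ^ q ≤ K * (exp (v x ^ 2 / a ^ 2) - 1) * a ^ q := by
          gcongr
      _ = _ := by ring
  have hint : ∫⁻ x, ‖v x‖ₑ ^ q ∂μ ≤ ENNReal.ofReal (K * a ^ q) :=
    calc ∫⁻ x, ‖v x‖ₑ ^ q ∂μ
        ≤ ∫⁻ x, ENNReal.ofReal (K * a ^ q) * ENNReal.ofReal (exp (v x ^ 2 / a ^ 2) - 1) ∂μ :=
          lintegral_mono hpt
      _ = ENNReal.ofReal (K * a ^ q) * expSqModular μ v a :=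
          lintegral_const_mul' _ _ ENNReal.ofReal_ne_top
      _ ≤ ENNReal.ofReal (K * a ^ q) := mul_le_of_le_one_right' hv
  rw [eLpNorm_eq_lintegral_rpow_enorm_toReal (by simpa using hq0) ENNReal.ofReal_ne_top,
    ENNReal.toReal_ofReal hq0.le]
  calc (∫⁻ x, ‖v x‖ₑ ^ q ∂μ) ^ (1 / q) ≤ ENNReal.ofReal (K * a ^ q) ^ (1 / q) := by gcongr
    _ = ENNReal.ofReal (expL2EmbeddingConst q * a) := by
      rw [ENNReal.ofReal_rpow_of_nonneg (by positivity) (by positivity),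
        mul_rpow (by positivity) (by positivity), ← rpow_mul ha.le, mul_one_div_cancel hq0.ne',
        rpow_one, one_div, expL2EmbeddingConst]

theorem expSqModular_sub_le_one {u w : α → ℝ} (hu : Measurable u) {a b : ℝ} (ha : 0 < a)
    (hb : 0 < b) (hua : expSqModular μ u a ≤ 1) (hwb : expSqModular μ w b ≤ 1) :
    expSqModular μ (fun x ↦ u x - w x) (2 * max a b) ≤ 1 := by
  have hpt : ∀ x, ENNReal.ofReal (exp ((u x - w x) ^ 2 / (2 * max a b) ^ 2) - 1) ≤
      2⁻¹ * ENNReal.ofReal (exp (u x ^ 2 / a ^ 2) - 1) +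
        2⁻¹ * ENNReal.ofReal (exp (w x ^ 2 / b ^ 2) - 1) := by
    intro x
    have h2 : (2⁻¹ : ℝ≥0∞) = ENNReal.ofReal 2⁻¹ := by simp
    rw [h2, ← ENNReal.ofReal_mul (by norm_num), ← ENNReal.ofReal_mul (by norm_num)]
    exact (ENNReal.ofReal_le_ofReal (exp_sub_sq_div_sub_one_le ha hb)).trans ENNReal.ofReal_add_le
  calc expSqModular μ (fun x ↦ u x - w x) (2 * max a b)
      ≤ ∫⁻ x, 2⁻¹ * ENNReal.ofReal (exp (u x ^ 2 / a ^ 2) - 1) +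
          2⁻¹ * ENNReal.ofReal (exp (w x ^ 2 / b ^ 2) - 1) ∂μ := lintegral_mono hpt
    _ = 2⁻¹ * expSqModular μ u a + 2⁻¹ * expSqModular μ w b := by
      rw [lintegral_add_left (by fun_prop), lintegral_const_mul' _ _ (by simp),
        lintegral_const_mul' _ _ (by simp), expSqModular, expSqModular]
    _ ≤ 2⁻¹ * 1 + 2⁻¹ * 1 := by gcongr
    _ = 1 := by rw [mul_one, ENNReal.inv_two_add_inv_two]

theorem eLpNorm_le_mul_one_add_add {p : ℝ≥0∞} (hp : 1 ≤ p) {F v g h : α → ℝ}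
    (hv : AEStronglyMeasurable v μ) (hg : AEStronglyMeasurable g μ)
    (hh : AEStronglyMeasurable h μ) (hF : ∀ x, ‖F x‖ ≤ ‖v x‖ * (2 + ‖g x‖ + ‖h x‖)) {K : ℝ≥0∞}
    (hKp : 2 * eLpNorm v p μ ≤ K) (hK2p : eLpNorm v (2 * p) μ ≤ K) :
    eLpNorm F p μ ≤ K * (1 + eLpNorm g (2 * p) μ + eLpNorm h (2 * p) μ) := by
  have holder : ∀ k : α → ℝ, AEStronglyMeasurable k μ →
      eLpNorm (fun x ↦ v x * k x) p μ ≤ K * eLpNorm k (2 * p) μ := fun k hk ↦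
    (eLpNorm_le_eLpNorm_mul_eLpNorm'_of_norm hv hk (· * ·) 1 (.of_forall fun x ↦ by simp)
      (hpqr := ENNReal.holderTriple_two_mul p)).trans (by rw [ENNReal.coe_one, one_mul]; gcongr)
  have htwo : eLpNorm (fun x ↦ 2 * v x) p μ ≤ K := by
    have : (fun x ↦ 2 * v x) = (2 : ℝ) • v := rfl
    rwa [this, eLpNorm_const_smul, ← ofReal_norm, Real.norm_ofNat, ENNReal.ofReal_ofNat]
  calc eLpNorm F p μ
      ≤ eLpNorm ((fun x ↦ ‖2 * v x‖) + (fun x ↦ ‖v x * g x‖) + (fun x ↦ ‖v x * h x‖)) p μ :=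
        eLpNorm_mono_real fun x ↦ by
          simp only [Pi.add_apply, norm_mul, Real.norm_ofNat]
          linarith [hF x]
    _ ≤ eLpNorm (fun x ↦ 2 * v x) p μ + eLpNorm (fun x ↦ v x * g x) p μ +
          eLpNorm (fun x ↦ v x * h x) p μ := by
        refine (eLpNorm_add_le ?_ ?_ hp).trans ?_
        · exact ((hv.const_mul 2).norm).add ((hv.mul hg).norm)
        · exact (hv.mul hh).norm
        gcongr
        · refine (eLpNorm_add_le ?_ ?_ hp).trans ?_
          · exact (hv.const_mul 2).norm
          · exact (hv.mul hg).norm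
          rw [eLpNorm_norm, eLpNorm_norm]
        · rw [eLpNorm_norm]
    _ ≤ K + K * eLpNorm g (2 * p) μ + K * eLpNorm h (2 * p) μ :=
        add_le_add (add_le_add htwo (holder g hg)) (holder h hh)
    _ = K * (1 + eLpNorm g (2 * p) μ + eLpNorm h (2 * p) μ) := by ring

end

theorem expL2Norm_nonneg {N : ℕ} (v : EuclideanSpace ℝ (Fin N) → ℝ) : 0 ≤ expL2Norm v :=
  Real.sInf_nonneg fun _ h ↦ h.1.le

theorem eLpNorm_le_expL2EmbeddingConst_mul_expL2Norm {N : ℕ} {q : ℝ} (hq : 2 ≤ q)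
    {v : EuclideanSpace ℝ (Fin N) → ℝ} (hv : ∃ a > 0, expSqModular volume v a ≤ 1) :
    eLpNorm v (ENNReal.ofReal q) volume ≤ ENNReal.ofReal (expL2EmbeddingConst q * expL2Norm v) := by
  have hc := expL2EmbeddingConst_pos q
  obtain ⟨a, ha, hva⟩ := hv
  have hfin : eLpNorm v (ENNReal.ofReal q) volume ≠ ⊤ :=
    ne_top_of_le_ne_top ENNReal.ofReal_ne_top (eLpNorm_le_of_expSqModular_le_one hq ha hva)
  rw [← ENNReal.ofReal_toReal hfin]
  refine ENNReal.ofReal_le_ofReal ((div_le_iff₀' hc).1 (le_csInf ⟨a, ha, hva⟩ ?_))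
  rintro b ⟨hb, hvb⟩
  exact (div_le_iff₀' hc).2 <|
    ENNReal.toReal_le_of_le_ofReal (by positivity) (eLpNorm_le_of_expSqModular_le_one hq hb hvb)

theorem nonlinearity_Lp_estimate_general {N : ℕ} (C lam p : ℝ) (hC : 0 < C)
    (hp : 2 ≤ p) (f : ℝ → ℝ)
    (hf : ∀ u v : ℝ, |f u - f v| ≤
      C * |u - v| * (Real.exp (lam * u ^ 2) + Real.exp (lam * v ^ 2))) :
    ∃ C' > (0 : ℝ), ∀ u w : EuclideanSpace ℝ (Fin N) → ℝ,
      Measurable u → Measurable w →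
      (∃ α > (0 : ℝ), (∫⁻ x, ENNReal.ofReal (Real.exp ((u x) ^ 2 / α ^ 2) - 1)) ≤ 1) →
      (∃ α > (0 : ℝ), (∫⁻ x, ENNReal.ofReal (Real.exp ((w x) ^ 2 / α ^ 2) - 1)) ≤ 1) →
      eLpNorm (fun x => f (u x) - f (w x)) (ENNReal.ofReal p) volume ≤
        ENNReal.ofReal (C' * expL2Norm (fun x => u x - w x)) *
          (1 + eLpNorm (fun x => Real.exp (lam * (u x) ^ 2) - 1) (ENNReal.ofReal (2 * p)) volume
             + eLpNorm (fun x => Real.exp (lam * (w x) ^ 2) - 1) (ENNReal.ofReal (2 * p)) volume)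
    := by
  set c := max (expL2EmbeddingConst p) (expL2EmbeddingConst (2 * p))
  refine ⟨2 * C * c, mul_pos (by positivity) ((expL2EmbeddingConst_pos p).trans_le
    (le_max_left _ _)), ?_⟩
  intro u w hu hw ⟨a, ha, hua⟩ ⟨b, hb, hwb⟩
  set A := expL2Norm (fun x => u x - w x)
  have hLq {q : ℝ} (hq : 2 ≤ q) (hqc : expL2EmbeddingConst q ≤ c) :
      eLpNorm (fun x ↦ C * (u x - w x)) (ENNReal.ofReal q) volume ≤ ENNReal.ofReal (C * c * A) := by
    rw [show (fun x ↦ C * (u x - w x)) = C • fun x ↦ u x - w x from rfl, eLpNorm_const_smul,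
      ← ofReal_norm, Real.norm_of_nonneg hC.le, mul_assoc, ENNReal.ofReal_mul hC.le]
    gcongr
    refine (eLpNorm_le_expL2EmbeddingConst_mul_expL2Norm hq
      ⟨2 * max a b, by positivity, expSqModular_sub_le_one hu ha hb hua hwb⟩).trans ?_
    gcongr
    exact expL2Norm_nonneg _
  have hpoint (x) : ‖f (u x) - f (w x)‖ ≤ ‖C * (u x - w x)‖ *
      (2 + ‖exp (lam * u x ^ 2) - 1‖ + ‖exp (lam * w x ^ 2) - 1‖) := by
    simp only [Real.norm_eq_abs, abs_mul, abs_of_pos hC]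
    refine (hf (u x) (w x)).trans (mul_le_mul_of_nonneg_left ?_ (by positivity))
    linarith [le_abs_self (exp (lam * u x ^ 2) - 1), le_abs_self (exp (lam * w x ^ 2) - 1)]
  have h2p : ENNReal.ofReal (2 * p) = 2 * ENNReal.ofReal p := by
    rw [ENNReal.ofReal_mul zero_le_two, ENNReal.ofReal_ofNat]
  rw [h2p, show 2 * C * c * A = 2 * (C * c * A) by ring, ENNReal.ofReal_mul zero_le_two,
    ENNReal.ofReal_ofNat]
  refine eLpNorm_le_mul_one_add_add (by simpa using hp.trans' one_le_two)
    (by fun_prop) (by fun_prop) (by fun_prop) hpoint ?_ ?_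
  · gcongr
    exact hLq hp (le_max_left _ _)
  · rw [← h2p]
    exact (hLq (by linarith) (le_max_right _ _)).trans (le_mul_of_one_le_left' one_le_two)

/-- Lipschitz-type estimate for nonlinearities of exponential growth:
    ‖f(u)−f(w)‖_{L^p} ≤ C'‖u−w‖_{exp L²}(1 + ‖e^{λu²}−1‖_{L^{2p}} + ‖e^{λw²}−1‖_{L^{2p}}). -/
theorem nonlinearity_Lp_estimate {N : ℕ} (C lam p : ℝ) (hC : 0 < C) (hlam : 0 < lam)
    (hp : 2 ≤ p) (f : ℝ → ℝ) (hf0 : f 0 = 0)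
    (hf : ∀ u v : ℝ, |f u - f v| ≤
      C * |u - v| * (Real.exp (lam * u ^ 2) + Real.exp (lam * v ^ 2))) :
    ∃ C' > (0 : ℝ), ∀ u w : EuclideanSpace ℝ (Fin N) → ℝ,
      Measurable u → Measurable w →
      (∃ α > (0 : ℝ), (∫⁻ x, ENNReal.ofReal (Real.exp ((u x) ^ 2 / α ^ 2) - 1)) ≤ 1) →
      (∃ α > (0 : ℝ), (∫⁻ x, ENNReal.ofReal (Real.exp ((w x) ^ 2 / α ^ 2) - 1)) ≤ 1) →
      eLpNorm (fun x => f (u x) - f (w x)) (ENNReal.ofReal p) volume ≤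
        ENNReal.ofReal (C' * expL2Norm (fun x => u x - w x)) *
          (1 + eLpNorm (fun x => Real.exp (lam * (u x) ^ 2) - 1) (ENNReal.ofReal (2 * p)) volume
             + eLpNorm (fun x => Real.exp (lam * (w x) ^ 2) - 1) (ENNReal.ofReal (2 * p)) volume) :=
  nonlinearity_Lp_estimate_general C lam p hC hp f hf
end

section
/- Let λ > 0, m ≥ 2, 1 ≤ r, and let u ∈ exp L²(R^N) with ‖u‖_{exp L²} ≤ M where 2rλM² ≤ 1 and mr ≥ 2. If f satisfies f(0)=0 and |f(u)| ≤ C|u|^m e^{λu²}, then ‖f(u)‖_{L^r} ≤ C' M^m for a constant C' depending only on C, r, m, λ. -/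
/-!
The smallness condition `2 r λ M² ≤ 1` spends only half of the Orlicz exponential on the growth
of `f`: with `t = s² / M²`, `|f s| ^ r ≤ C ^ r M ^ (m r) t ^ (m r / 2) e ^ (t / 2)`, and the other
half absorbs the power, `t ^ a e ^ (t / 2) ≤ (2 a) ^ a (e ^ t - 1)` for `a ≥ 1`. Integrating this
pointwise bound against `∫ (e ^ (u² / M²) - 1) ≤ 1` gives `‖f ∘ u‖_r ≤ C (m r) ^ (m / 2) M ^ m`.
-/

open MeasureTheory Real

lemma div_rpow_le_exp_sub_one {a t : ℝ} (ha : 1 ≤ a) (ht : 0 ≤ t) :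
    (t / a) ^ a ≤ exp t - 1 := by
  have ha0 : 0 < a := by linarith
  have hz : t / a ≤ exp (t / a) - 1 := by linarith [add_one_le_exp (t / a)]
  -- superadditivity of `x ↦ x ^ a` at `x = exp (t / a) - 1` and `1`
  have hsuper := add_rpow_le_rpow_add (hz.trans' (by positivity)) zero_le_one ha
  rw [one_rpow, sub_add_cancel, ← exp_mul, div_mul_cancel₀ t ha0.ne'] at hsuper
  calc (t / a) ^ a ≤ (exp (t / a) - 1) ^ a := rpow_le_rpow (by positivity) hz ha0.le
    _ ≤ exp t - 1 := by linarith

lemma rpow_mul_exp_half_le {a t : ℝ} (ha : 1 ≤ a) (ht : 0 ≤ t) :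
    t ^ a * exp (t / 2) ≤ (2 * a) ^ a * (exp t - 1) := by
  have ha0 : 0 < a := by linarith
  have hsplit : t ^ a = (2 * a) ^ a * ((t / 2) / a) ^ a := by
    rw [← mul_rpow (by positivity) (by positivity)]
    congr 1
    field_simp
  have hexp : exp (t / 2) * (exp (t / 2) - 1) ≤ exp t - 1 := by
    have : exp (t / 2) * exp (t / 2) = exp t := by rw [← exp_add, add_halves]
    linarith [one_le_exp (by linarith : 0 ≤ t / 2)]
  calc t ^ a * exp (t / 2) = (2 * a) ^ a * (((t / 2) / a) ^ a * exp (t / 2)) := by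
        rw [hsplit, mul_assoc]
    _ ≤ (2 * a) ^ a * ((exp (t / 2) - 1) * exp (t / 2)) := by
        gcongr
        exact div_rpow_le_exp_sub_one ha (by linarith)
    _ ≤ (2 * a) ^ a * (exp t - 1) := by
        gcongr
        linarith

lemma abs_rpow_mul_exp_sq_half_le {p x : ℝ} (hp : 2 ≤ p) :
    |x| ^ p * exp (x ^ 2 / 2) ≤ p ^ (p / 2) * (exp (x ^ 2) - 1) := by
  have hpow : (x ^ 2) ^ (p / 2) = |x| ^ p := by
    rw [← sq_abs, ← rpow_natCast, ← rpow_mul (abs_nonneg x), Nat.cast_ofNat,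
      mul_div_cancel₀ p two_ne_zero]
  have h := rpow_mul_exp_half_le (by linarith : 1 ≤ p / 2) (sq_nonneg x)
  rwa [hpow, mul_div_cancel₀ p two_ne_zero] at h

lemma abs_rpow_le_of_abs_le_mul_exp_sq {f : ℝ → ℝ} {lam m r C M : ℝ} (hr : 0 < r)
    (hmr : 2 ≤ m * r) (hC : 0 ≤ C) (hM : 0 < M) (hsmall : 2 * r * lam * M ^ 2 ≤ 1)
    (hf : ∀ s : ℝ, |f s| ≤ C * |s| ^ m * exp (lam * s ^ 2)) (s : ℝ) :
    |f s| ^ r ≤ (C * (m * r) ^ (m / 2) * M ^ m) ^ r * (exp (s ^ 2 / M ^ 2) - 1) := by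
  set x := s / M with hx
  have hs : s = M * x := by rw [hx]; field_simp
  have hexp : r * lam * s ^ 2 ≤ x ^ 2 / 2 := by
    have := mul_le_mul_of_nonneg_right hsmall (sq_nonneg x)
    rw [hs]; linarith
  have hmr0 : 0 ≤ m * r := by linarith
  have hconst : (C * (m * r) ^ (m / 2) * M ^ m) ^ r
      = C ^ r * M ^ (m * r) * (m * r) ^ (m * r / 2) := by
    rw [mul_rpow (by positivity) (by positivity), mul_rpow hC (by positivity),
      ← rpow_mul hmr0, ← rpow_mul hM.le]
    ring_nf
  calc |f s| ^ r ≤ (C * |s| ^ m * exp (lam * s ^ 2)) ^ r :=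
        rpow_le_rpow (abs_nonneg _) (hf s) hr.le
    _ = C ^ r * M ^ (m * r) * (|x| ^ (m * r) * exp (r * lam * s ^ 2)) := by
        rw [mul_rpow (by positivity) (exp_nonneg _), mul_rpow hC (by positivity), ← exp_mul,
          ← rpow_mul (abs_nonneg s), hs, abs_mul, abs_of_pos hM,
          mul_rpow hM.le (abs_nonneg x)]
        ring_nf
    _ ≤ C ^ r * M ^ (m * r) * (|x| ^ (m * r) * exp (x ^ 2 / 2)) := by gcongr
    _ ≤ C ^ r * M ^ (m * r) * ((m * r) ^ (m * r / 2) * (exp (x ^ 2) - 1)) :=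
        mul_le_mul_of_nonneg_left (abs_rpow_mul_exp_sq_half_le hmr) (by positivity)
    _ = (C * (m * r) ^ (m / 2) * M ^ m) ^ r * (exp (s ^ 2 / M ^ 2) - 1) := by
        rw [hconst, hx, div_pow]
        ring

lemma eLpNorm_le_of_rpow_le_mul {α E : Type*} [MeasurableSpace α] [NormedAddCommGroup E]
    {μ : Measure α} {g : α → E} {h : α → ℝ} {p K : ℝ} (hp : 0 < p) (hK : 0 ≤ K)
    (hg : ∀ x, ‖g x‖ ^ p ≤ K ^ p * h x) (hh : ∫⁻ x, ENNReal.ofReal (h x) ∂μ ≤ 1) :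
    eLpNorm g (ENNReal.ofReal p) μ ≤ ENNReal.ofReal K := by
  rw [eLpNorm_eq_lintegral_rpow_enorm_toReal (by simpa using hp) ENNReal.ofReal_ne_top,
    ENNReal.toReal_ofReal hp.le]
  have hint : ∫⁻ x, ‖g x‖ₑ ^ p ∂μ ≤ ENNReal.ofReal (K ^ p) :=
    calc ∫⁻ x, ‖g x‖ₑ ^ p ∂μ ≤ ∫⁻ x, ENNReal.ofReal (K ^ p) * ENNReal.ofReal (h x) ∂μ := by
          refine lintegral_mono fun x => ?_
          rw [← ofReal_norm, ENNReal.ofReal_rpow_of_nonneg (norm_nonneg _) hp.le,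
            ← ENNReal.ofReal_mul (by positivity)]
          exact ENNReal.ofReal_le_ofReal (hg x)
      _ ≤ ENNReal.ofReal (K ^ p) := by
          rw [lintegral_const_mul' _ _ ENNReal.ofReal_ne_top]
          exact mul_le_of_le_one_right' hh
  calc (∫⁻ x, ‖g x‖ₑ ^ p ∂μ) ^ (1 / p) ≤ ENNReal.ofReal (K ^ p) ^ (1 / p) := by gcongr
    _ = ENNReal.ofReal K := by
        rw [ENNReal.ofReal_rpow_of_nonneg (by positivity) (by positivity), ← rpow_mul hK,
          mul_one_div_cancel hp.ne', rpow_one]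

theorem nonlinearity_Lr_bound_general {N : ℕ} (lam m r C : ℝ)
    (hr : 1 ≤ r) (hmr : 2 ≤ m * r) (hC : 0 < C)
    (f : ℝ → ℝ)
    (hf : ∀ s : ℝ, |f s| ≤ C * |s| ^ m * Real.exp (lam * s ^ 2)) :
    ∃ C' > (0 : ℝ), ∀ (u : EuclideanSpace ℝ (Fin N) → ℝ) (M : ℝ),
      Measurable u → 0 < M → 2 * r * lam * M ^ 2 ≤ 1 →
      (∫⁻ x, ENNReal.ofReal (Real.exp ((u x) ^ 2 / M ^ 2) - 1)) ≤ 1 →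
      eLpNorm (fun x => f (u x)) (ENNReal.ofReal r) volume ≤
        ENNReal.ofReal (C' * M ^ m) := by
  have hr0 : 0 < r := by linarith
  have hmr0 : 0 < m * r := by linarith
  refine ⟨C * (m * r) ^ (m / 2), mul_pos hC (rpow_pos_of_pos hmr0 _),
    fun u M _ hM hsmall hint => ?_⟩
  exact eLpNorm_le_of_rpow_le_mul hr0 (by positivity)
    (fun x => abs_rpow_le_of_abs_le_mul_exp_sq hr0 hmr hC.le hM hsmall hf (u x)) hint

/-- If ‖u‖_{exp L²} ≤ M (expressed via the Luxembourg integral condition),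
    2rλM² ≤ 1 and |f(s)| ≤ C|s|^m e^{λs²} with f(0)=0, then ‖f(u)‖_{L^r} ≤ C' M^m
    with C' depending only on C, r, m, λ. -/
theorem nonlinearity_Lr_bound {N : ℕ} (lam m r C : ℝ) (hlam : 0 < lam) (hm : 2 ≤ m)
    (hr : 1 ≤ r) (hmr : 2 ≤ m * r) (hC : 0 < C)
    (f : ℝ → ℝ) (hf0 : f 0 = 0)
    (hf : ∀ s : ℝ, |f s| ≤ C * |s| ^ m * Real.exp (lam * s ^ 2)) :
    ∃ C' > (0 : ℝ), ∀ (u : EuclideanSpace ℝ (Fin N) → ℝ) (M : ℝ),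
      Measurable u → 0 < M → 2 * r * lam * M ^ 2 ≤ 1 →
      (∫⁻ x, ENNReal.ofReal (Real.exp ((u x) ^ 2 / M ^ 2) - 1)) ≤ 1 →
      eLpNorm (fun x => f (u x)) (ENNReal.ofReal r) volume ≤
        ENNReal.ofReal (C' * M ^ m) :=
  nonlinearity_Lr_bound_general lam m r C hr hmr hC f hf
end
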